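/- Let n ≥ 2 and let M' be the n-state modified Moore automaton over {a, b, c}. Then the transition monoid generated by the two transition maps T_a and T_b (the submonoid of self-maps of the powerset of the state set under composition) has cardinality at most n(n+1) = n² + n. -/

import Mathlib

/-- The three-letter alphabet `{a, b, c}`. -/
inductive ABC : Type
  | a : ABC
  | b : ABC
  | c : ABC
deriving DecidableEq

instance instFintypeABC : Fintype ABC where
  elems := {ABC.a, ABC.b, ABC.c}
  complete := by intro x; cases x <;> simp

/-- The `n`-state modified Moore automaton over `{a,b,c}`: states `{1, …, n}` are
represented by `Fin n` (`q : Fin n` stands for state `q.val + 1`).  Transitions: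
`1 —b→ 1`, `1 —a→ 2`, `i —a→ i+1` and `i —b→ i+1` for `2 ≤ i ≤ n-1`, and `n —c→ 1`,
`n —c→ 2`.  Start state `1`, accepting state `n`. -/
def modMooreNFA (n : ℕ) : NFA ABC (Fin n) where
  step q x :=
    { p | (q.val = 0 ∧ x = ABC.b ∧ p.val = 0) ∨
          (q.val = 0 ∧ x = ABC.a ∧ p.val = 1) ∨
          (1 ≤ q.val ∧ q.val + 1 ≤ n - 1 ∧ (x = ABC.a ∨ x = ABC.b) ∧ p.val = q.val + 1) ∨
          (q.val = n - 1 ∧ x = ABC.c ∧ (p.val = 0 ∨ p.val = 1)) }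
  start := { q | q.val = 0 }
  accept := { q | q.val = n - 1 }

def gmap (n k : ℕ) (Z : Set (Fin n)) : Function.End (Set (Fin n)) :=
  fun S => {p | (∃ q ∈ S, 1 ≤ q.val ∧ p.val = q.val + k) ∨ ((∃ q ∈ S, q.val = 0) ∧ p ∈ Z)}

lemma mem_gmap {n k : ℕ} {Z S : Set (Fin n)} {p : Fin n} :
    p ∈ gmap n k Z S ↔
      (∃ q ∈ S, 1 ≤ q.val ∧ p.val = q.val + k) ∨ ((∃ q ∈ S, q.val = 0) ∧ p ∈ Z) := Iff.rfl

lemma gmap_mul (n k k' : ℕ) (Z Z' : Set (Fin n)) :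
    gmap n k Z * gmap n k' Z' = gmap n (k + k') (gmap n k Z Z') := by
  funext S
  show gmap n k Z (gmap n k' Z' S) = _
  ext p
  have hp := p.isLt
  simp only [mem_gmap]
  constructor
  · rintro (⟨q', hq', h1, hpe⟩ | ⟨⟨q', hq', hq'0⟩, hpZ⟩)
    · rcases hq' with ⟨q, hq, h1q, hq'e⟩ | ⟨h0, hq'Z'⟩
      · exact Or.inl ⟨q, hq, h1q, by omega⟩
      · exact Or.inr ⟨h0, Or.inl ⟨q', hq'Z', h1, hpe⟩⟩
    · rcases hq' with ⟨q, hq, h1q, hq'e⟩ | ⟨h0, hq'Z'⟩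
      · omega
      · exact Or.inr ⟨h0, Or.inr ⟨⟨q', hq'Z', hq'0⟩, hpZ⟩⟩
  · rintro (⟨q, hq, h1q, hpe⟩ | ⟨h0, (⟨j, hj, h1j, hpe⟩ | ⟨⟨j, hj, hj0⟩, hpZ⟩)⟩)
    · exact Or.inl ⟨⟨q.val + k', by omega⟩, Or.inl ⟨q, hq, h1q, rfl⟩, by simpa using by omega,
        by simp; omega⟩
    · exact Or.inl ⟨j, Or.inr ⟨h0, hj⟩, h1j, hpe⟩
    · exact Or.inr ⟨⟨j, Or.inr ⟨h0, hj⟩, hj0⟩, hpZ⟩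

lemma gmap_min (n k : ℕ) (Z : Set (Fin n)) : gmap n k Z = gmap n (min k (n - 1)) Z := by
  funext S; ext p
  have hp := p.isLt
  simp only [mem_gmap]
  constructor <;> rintro (⟨q, hq, h1, hpe⟩ | h)
  · exact Or.inl ⟨q, hq, h1, by omega⟩
  · exact Or.inr h
  · exact Or.inl ⟨q, hq, h1, by omega⟩
  · exact Or.inr h

def gsmall {n : ℕ} (Z : Set (Fin n)) : Prop := Z = ∅ ∨ ∃ j : Fin n, Z = {j}

lemma gmap_singleton {n k : ℕ} (Z : Set (Fin n)) (j : Fin n) :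
    gmap n k Z {j} = {p | (1 ≤ j.val ∧ p.val = j.val + k) ∨ (j.val = 0 ∧ p ∈ Z)} := by
  ext p
  simp only [mem_gmap, Set.mem_singleton_iff, Set.mem_setOf_eq]
  constructor
  · rintro (⟨q, rfl, h⟩ | ⟨⟨q, rfl, h0⟩, hpZ⟩)
    · exact Or.inl h
    · exact Or.inr ⟨h0, hpZ⟩
  · rintro (⟨h1, hpe⟩ | ⟨h0, hpZ⟩)
    · exact Or.inl ⟨j, rfl, h1, hpe⟩
    · exact Or.inr ⟨⟨j, rfl, h0⟩, hpZ⟩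

lemma gsmall_gmap {n k : ℕ} {Z Z' : Set (Fin n)} (hZ : gsmall Z) (hZ' : gsmall Z') :
    gsmall (gmap n k Z Z') := by
  rcases hZ' with rfl | ⟨j, rfl⟩
  · left; ext p; simp [mem_gmap]
  · rw [gmap_singleton]
    by_cases hj : j.val = 0
    · have : {p : Fin n | (1 ≤ j.val ∧ p.val = j.val + k) ∨ (j.val = 0 ∧ p ∈ Z)} = Z := by
        ext p; simp [hj]
      rw [this]; exact hZ
    · by_cases hk : j.val + k < n
      · right
        refine ⟨⟨j.val + k, hk⟩, ?_⟩
        ext p; have := p.isLt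
        simp only [Set.mem_setOf_eq, Set.mem_singleton_iff, Fin.ext_iff]
        constructor
        · rintro (⟨_, hpe⟩ | ⟨h0, _⟩) <;> omega
        · intro h; exact Or.inl ⟨by omega, by simpa using h⟩
      · left
        ext p; have := p.isLt
        simp only [Set.mem_setOf_eq, Set.mem_empty_iff_false, iff_false]
        rintro (⟨_, hpe⟩ | ⟨h0, _⟩) <;> omega

lemma gmap_one (n : ℕ) (hn : 1 ≤ n) : gmap n 0 {(⟨0, hn⟩ : Fin n)} = 1 := by
  funext S
  show gmap n 0 _ S = S
  ext p
  simp only [mem_gmap, Set.mem_singleton_iff]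
  constructor
  · rintro (⟨q, hq, h1, hpe⟩ | ⟨⟨q, hq, h0⟩, hpZ⟩)
    · have : p = q := Fin.ext (by omega)
      exact this ▸ hq
    · have : p = q := by
        rw [hpZ]; exact (Fin.ext h0.symm)
      exact this ▸ hq
  · intro hp
    by_cases h0 : p.val = 0
    · exact Or.inr ⟨⟨p, hp, h0⟩, Fin.ext h0⟩
    · exact Or.inl ⟨p, hp, by omega, by omega⟩

def Tmon (n : ℕ) (hn : 1 ≤ n) : Submonoid (Function.End (Set (Fin n))) where
  carrier := {f | ∃ k Z, gsmall Z ∧ f = gmap n k Z}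
  one_mem' := ⟨0, {(⟨0, hn⟩ : Fin n)}, Or.inr ⟨_, rfl⟩, (gmap_one n hn).symm⟩
  mul_mem' := by
    rintro f g ⟨k, Z, hZ, rfl⟩ ⟨k', Z', hZ', rfl⟩
    exact ⟨k + k', _, gsmall_gmap hZ hZ', gmap_mul n k k' Z Z'⟩

lemma stepSet_a (n : ℕ) (hn : 2 ≤ n) :
    (fun S => (modMooreNFA n).stepSet S ABC.a) =
      gmap n 1 {(⟨1, by omega⟩ : Fin n)} := by
  funext S; ext p
  have hp := p.isLt
  simp only [NFA.mem_stepSet, modMooreNFA, Set.mem_setOf_eq, mem_gmap,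
    Set.mem_singleton_iff, Fin.ext_iff]
  constructor
  · rintro ⟨q, hq, h⟩
    rcases h with ⟨h0, hb, _⟩ | ⟨h0, _, hpe⟩ | ⟨h1, hle, _, hpe⟩ | ⟨_, hc, _⟩
    · exact ABC.noConfusion hb
    · exact Or.inr ⟨⟨q, hq, h0⟩, hpe⟩
    · exact Or.inl ⟨q, hq, h1, hpe⟩
    · exact ABC.noConfusion hc
  · rintro (⟨q, hq, h1, hpe⟩ | ⟨⟨q, hq, h0⟩, hpe⟩)
    · exact ⟨q, hq, Or.inr (Or.inr (Or.inl ⟨h1, by omega, Or.inl trivial, hpe⟩))⟩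
    · exact ⟨q, hq, Or.inr (Or.inl ⟨h0, trivial, by simpa using hpe⟩)⟩

lemma stepSet_b (n : ℕ) (hn : 2 ≤ n) :
    (fun S => (modMooreNFA n).stepSet S ABC.b) =
      gmap n 1 {(⟨0, by omega⟩ : Fin n)} := by
  funext S; ext p
  have hp := p.isLt
  simp only [NFA.mem_stepSet, modMooreNFA, Set.mem_setOf_eq, mem_gmap,
    Set.mem_singleton_iff, Fin.ext_iff]
  constructor
  · rintro ⟨q, hq, h⟩
    rcases h with ⟨h0, _, hpe⟩ | ⟨h0, ha, _⟩ | ⟨h1, hle, _, hpe⟩ | ⟨_, hc, _⟩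
    · exact Or.inr ⟨⟨q, hq, h0⟩, hpe⟩
    · exact ABC.noConfusion ha
    · exact Or.inl ⟨q, hq, h1, hpe⟩
    · exact ABC.noConfusion hc
  · rintro (⟨q, hq, h1, hpe⟩ | ⟨⟨q, hq, h0⟩, hpe⟩)
    · exact ⟨q, hq, Or.inr (Or.inr (Or.inl ⟨h1, by omega, Or.inr trivial, hpe⟩))⟩
    · exact ⟨q, hq, Or.inl ⟨h0, trivial, by simpa using hpe⟩⟩


/-- for the `n`-state modified Moore automaton (`n ≥ 2`), the transition
monoid generated by the two transition maps `T_a` and `T_b` (a submonoid of the monoid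
of self-maps of `Set (Fin n)` under composition) has cardinality at most
`n(n+1) = n² + n`. -/
theorem modified_moore_monoid_bound (n : ℕ) (hn : 2 ≤ n) :
    Nat.card (Submonoid.closure
      ({ fun S => (modMooreNFA n).stepSet S ABC.a,
         fun S => (modMooreNFA n).stepSet S ABC.b } :
        Set (Function.End (Set (Fin n))))) ≤ n * (n + 1) := by
  have h1 : 1 ≤ n := by omega
  have hsub : Submonoid.closure
      ({ fun S => (modMooreNFA n).stepSet S ABC.a,
         fun S => (modMooreNFA n).stepSet S ABC.b } :
        Set (Function.End (Set (Fin n)))) ≤ Tmon n h1 := by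
    rw [Submonoid.closure_le]
    rintro f (rfl | rfl)
    · exact ⟨1, _, Or.inr ⟨_, rfl⟩, stepSet_a n hn⟩
    · exact ⟨1, _, Or.inr ⟨_, rfl⟩, stepSet_b n hn⟩
  let F : Fin n × Option (Fin n) → Function.End (Set (Fin n)) :=
    fun x => gmap n x.1.val (match x.2 with | none => ∅ | some j => {j})
  have hrange : (Tmon n h1 : Set (Function.End (Set (Fin n)))) ⊆ Set.range F := by
    rintro f ⟨k, Z, hZ, rfl⟩
    have hk : min k (n - 1) < n := by omega
    rcases hZ with rfl | ⟨j, rfl⟩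
    · exact ⟨(⟨min k (n - 1), hk⟩, none), (gmap_min n k ∅).symm⟩
    · exact ⟨(⟨min k (n - 1), hk⟩, some j), (gmap_min n k {j}).symm⟩
  have hsubset : ((Submonoid.closure
      ({ fun S => (modMooreNFA n).stepSet S ABC.a,
         fun S => (modMooreNFA n).stepSet S ABC.b } :
        Set (Function.End (Set (Fin n))))) : Set (Function.End (Set (Fin n)))) ⊆
      Set.range F := fun x hx => hrange (hsub hx)
  calc Nat.card (Submonoid.closure
      ({ fun S => (modMooreNFA n).stepSet S ABC.a,
         fun S => (modMooreNFA n).stepSet S ABC.b } :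
        Set (Function.End (Set (Fin n)))))
      ≤ Nat.card (Set.range F) := Nat.card_mono (Set.finite_range F) hsubset
    _ ≤ Nat.card (Fin n × Option (Fin n)) :=
        Nat.card_le_card_of_surjective (Set.rangeFactorization F)
          Set.rangeFactorization_surjective
    _ = n * (n + 1) := by simp [Nat.card_eq_fintype_card]
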